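/- arXiv:1109.0336 — 4 statements merged into one kernel-verified Lean document; each statement's English description precedes it below -/
import Mathlib

section
/- Let M be a partial matching of {1,…,n} and suppose (i1,i3) and (i2,i4) are arcs of M with i1<i2<i3<i4 (a crossing pair of arcs). Let M′ be the partial matching obtained from M by deleting the arcs (i1,i3) and (i2,i4) and inserting the arcs (i1,i4) and (i2,i3), all other arcs unchanged. Then the number of crossing pairs of arcs of M′ (pairs of arcs (s,t), (s′,t′) with s<s′<t<t′) is strictly less than the number of crossing pairs of arcs of M. Equivalently, replacing an occurrence of the clan pattern (1,2,1,2) by (1,2,2,1) in a clan strictly decreases the total number of occurrences of the pattern (1,2,1,2). -/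
open Finset Module

noncomputable section

/-- Symbols of an FS-pattern: `+`, `-`, `F` (first occurrence / opener),
`S` (second occurrence / closer). -/
inductive FSSymbol : Type
  | plus : FSSymbol
  | minus : FSSymbol
  | fst : FSSymbol
  | snd : FSSymbol
  deriving DecidableEq

/-- A `(p,q)`-clan on `{1,…,p+q}` (positions are `Fin (p+q)`, `0`-based).
`symbol i = Sum.inl j` means positions `i` and `j` carry the same natural
number (they form an arc), and `symbol i = Sum.inr true` (resp. `false`)
means position `i` carries a `+` (resp. a `-`).  The number of `+`'s minus
the number of `-`'s equals `p - q`. -/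
structure Clan (p q : ℕ) where
  symbol : Fin (p + q) → (Fin (p + q)) ⊕ Bool
  mate_ne : ∀ i j, symbol i = Sum.inl j → j ≠ i
  mate_invol : ∀ i j, symbol i = Sum.inl j → symbol j = Sum.inl i
  balance : (univ.filter fun i => symbol i = Sum.inr true).card + q
      = (univ.filter fun i => symbol i = Sum.inr false).card + p

namespace Clan

variable {p q : ℕ}

/-- `γ(i;+)`: the number of `+` signs and of arcs `(s,t)` with `t ≤ i`
among the first `i` positions (`i` is `1`-based). -/
def cplus (γ : Clan p q) (i : ℕ) : ℕ :=
  (univ.filter fun k : Fin (p + q) =>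
    k.val < i ∧ (γ.symbol k = Sum.inr true ∨ ∃ j, γ.symbol k = Sum.inl j ∧ j < k)).card

/-- `γ(i;-)`: the number of `-` signs and of arcs `(s,t)` with `t ≤ i`
among the first `i` positions (`i` is `1`-based). -/
def cminus (γ : Clan p q) (i : ℕ) : ℕ :=
  (univ.filter fun k : Fin (p + q) =>
    k.val < i ∧ (γ.symbol k = Sum.inr false ∨ ∃ j, γ.symbol k = Sum.inl j ∧ j < k)).card

/-- `γ(i;j)`: the number of arcs `(s,t)` with `s ≤ i < j < t`
(`i`, `j` are `1`-based). -/
def cpair (γ : Clan p q) (i j : ℕ) : ℕ :=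
  (univ.filter fun s : Fin (p + q) =>
    s.val < i ∧ ∃ t, γ.symbol s = Sum.inl t ∧ s < t ∧ j ≤ t.val).card

/-- The FS-pattern of a clan: signs stay, openers become `F`, closers `S`. -/
def FS (γ : Clan p q) (i : Fin (p + q)) : FSSymbol :=
  match γ.symbol i with
  | Sum.inr true => FSSymbol.plus
  | Sum.inr false => FSSymbol.minus
  | Sum.inl j => if j < i then FSSymbol.snd else FSSymbol.fst

/-- A clan avoids the pattern `(1,2,1,2)` iff no two of its arcs cross. -/
def Avoids1212 (γ : Clan p q) : Prop :=
  ¬ ∃ i1 i2 i3 i4 : Fin (p + q), i1 < i2 ∧ i2 < i3 ∧ i3 < i4 ∧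
      γ.symbol i1 = Sum.inl i3 ∧ γ.symbol i2 = Sum.inl i4

/-- `γ₊`: positions carrying a `+` or the second occurrence of a number. -/
def plusSet (γ : Clan p q) : Finset (Fin (p + q)) :=
  univ.filter fun i => γ.symbol i = Sum.inr true ∨ ∃ j, γ.symbol i = Sum.inl j ∧ j < i

/-- `γ̃₊`: positions carrying a `+` or the first occurrence of a number. -/
def tplusSet (γ : Clan p q) : Finset (Fin (p + q)) :=
  univ.filter fun i => γ.symbol i = Sum.inr true ∨ ∃ j, γ.symbol i = Sum.inl j ∧ i < j

end Clan

/-- The rank matrix `r_w(i,j) = #{k ≤ i : w(k) ≤ j}` (`i`, `j` are `1`-based). -/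
def rankMatrix {n : ℕ} (w : Equiv.Perm (Fin n)) (i j : ℕ) : ℕ :=
  (univ.filter fun k : Fin n => k.val < i ∧ (w k).val < j).card

/-- `u` is the permutation `u(γ)`: it assigns the values `p, p-1, …, 1` to the
positions of `γ₊` taken in increasing order, and `n, n-1, …, p+1` to the
positions of `γ₋` taken in increasing order (values are `0`-based, so the
`1`-based value of `u` at `i` is `(u i).val + 1`). -/
def IsUPerm {p q : ℕ} (γ : Clan p q) (u : Equiv.Perm (Fin (p + q))) : Prop :=
  ∀ i : Fin (p + q),
    (i ∈ γ.plusSet → (u i).val + 1 + (γ.plusSet.filter fun j => j < i).card = p) ∧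
    (i ∉ γ.plusSet →
      (u i).val + 1 + (univ.filter fun j => j ∉ γ.plusSet ∧ j < i).card = p + q)

/-- `v` is the permutation `v(γ)`: it assigns the values `1, …, p` to the
positions of `γ̃₊` taken in increasing order, and `p+1, …, n` to the
positions of `γ̃₋` taken in increasing order (values are `0`-based). -/
def IsVPerm {p q : ℕ} (γ : Clan p q) (v : Equiv.Perm (Fin (p + q))) : Prop :=
  ∀ i : Fin (p + q),
    (i ∈ γ.tplusSet → (v i).val = (γ.tplusSet.filter fun j => j < i).card) ∧
    (i ∉ γ.tplusSet →
      (v i).val = p + (univ.filter fun j => j ∉ γ.tplusSet ∧ j < i).card)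

/-- `E_j ⊆ ℂⁿ`: the span of the first `j` standard basis vectors, realized as
the subspace of vectors vanishing in coordinates `≥ j`. -/
def Efirst (n j : ℕ) : Submodule ℂ (Fin n → ℂ) :=
  ⨅ k ∈ {k : Fin n | j ≤ k.val}, LinearMap.ker (LinearMap.proj k : (Fin n → ℂ) →ₗ[ℂ] ℂ)

/-- `Ẽ_j ⊆ ℂⁿ`: the span of the last `j` standard basis vectors, realized as
the subspace of vectors vanishing in coordinates `< n - j`. -/
def Elast (n j : ℕ) : Submodule ℂ (Fin n → ℂ) :=
  ⨅ k ∈ {k : Fin n | k.val < n - j}, LinearMap.ker (LinearMap.proj k : (Fin n → ℂ) →ₗ[ℂ] ℂ)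

/-- The projection `π : ℂⁿ → E_p` with kernel `Ẽ_q` (for `n = p + q`). -/
def projE (n p : ℕ) : (Fin n → ℂ) →ₗ[ℂ] (Fin n → ℂ) where
  toFun v := fun k => if k.val < p then v k else 0
  map_add' u v := by funext k; by_cases h : k.val < p <;> simp [h]
  map_smul' c v := by funext k; by_cases h : k.val < p <;> simp [h]

/-- A complete flag `F_0 ⊂ F_1 ⊂ ⋯ ⊂ F_n` in `ℂⁿ`, `dim F_i = i`. -/
structure CompleteFlag (n : ℕ) where
  F : Fin (n + 1) → Submodule ℂ (Fin n → ℂ)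
  mono : Monotone F
  finrank_eq : ∀ i, finrank ℂ ↥(F i) = i.val

/-- Membership of a complete flag in the set `Q_γ`: the three linear-algebraic
conditions of Theorem `orbit_description`. -/
def MemQ {p q : ℕ} (γ : Clan p q) (Fl : CompleteFlag (p + q)) : Prop :=
  (∀ i : ℕ, 1 ≤ i → ∀ hi : i ≤ p + q,
      finrank ℂ ↥(Fl.F ⟨i, by omega⟩ ⊓ Efirst (p + q) p) = γ.cplus i ∧
      finrank ℂ ↥(Fl.F ⟨i, by omega⟩ ⊓ Elast (p + q) q) = γ.cminus i) ∧
  (∀ i j : ℕ, 1 ≤ i → ∀ hij : i < j, ∀ hj : j ≤ p + q,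
      finrank ℂ ↥((Fl.F ⟨i, by omega⟩).map (projE (p + q) p) ⊔ Fl.F ⟨j, by omega⟩)
        = j + γ.cpair i j)

/-- Membership in `K = GL(p,ℂ) × GL(q,ℂ)`, the block-diagonal subgroup of
`GL(p+q, ℂ)`: all entries mixing the first `p` and last `q` coordinates
vanish. -/
def InK (p q : ℕ) (g : (Matrix (Fin (p + q)) (Fin (p + q)) ℂ)ˣ) : Prop :=
  ∀ i j : Fin (p + q), ¬(i.val < p ↔ j.val < p) →
    (g : Matrix (Fin (p + q)) (Fin (p + q)) ℂ) i j = 0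

/-- `Fl' = g · Fl`: the flag `Fl'` is obtained by applying the invertible
matrix `g` to each subspace of the flag `Fl`. -/
def FlagMapsTo {n : ℕ} (g : (Matrix (Fin n) (Fin n) ℂ)ˣ) (Fl Fl' : CompleteFlag n) : Prop :=
  ∀ i, Fl'.F i = (Fl.F i).map (Matrix.mulVecLin (g : Matrix (Fin n) (Fin n) ℂ))

/-- A partial matching of `{1,…,n}`, given by its set of arcs `(s,t)`, `s < t`;
distinct arcs are disjoint. -/
def IsPartialMatching {n : ℕ} (M : Finset (Fin n × Fin n)) : Prop :=
  (∀ a ∈ M, a.1 < a.2) ∧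
  ∀ a ∈ M, ∀ b ∈ M, a ≠ b → a.1 ≠ b.1 ∧ a.1 ≠ b.2 ∧ a.2 ≠ b.1 ∧ a.2 ≠ b.2

/-- The number of crossing pairs of arcs of `M` (each crossing pair counted
once, ordered by its smaller opener). -/
def crossNum {n : ℕ} (M : Finset (Fin n × Fin n)) : ℕ :=
  ((M ×ˢ M).filter fun ab =>
    ab.1.1 < ab.2.1 ∧ ab.2.1 < ab.1.2 ∧ ab.1.2 < ab.2.2).card

/-- `M` is a noncrossing partial matching whose openers are exactly the
`F`-positions of the pattern `d` and whose closers are exactly the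
`S`-positions of `d`. -/
def MatchesPattern {n : ℕ} (d : Fin n → FSSymbol) (M : Finset (Fin n × Fin n)) : Prop :=
  IsPartialMatching M ∧
  (∀ i : Fin n, (∃ t, (i, t) ∈ M) ↔ d i = FSSymbol.fst) ∧
  (∀ i : Fin n, (∃ s, (s, i) ∈ M) ↔ d i = FSSymbol.snd) ∧
  ¬ ∃ a ∈ M, ∃ b ∈ M, a.1 < b.1 ∧ b.1 < a.2 ∧ a.2 < b.2

/-- The values `{w(1),…,w(i)}` arranged in increasing order. -/
def sortedPrefix {n : ℕ} (w : Equiv.Perm (Fin n)) (i : ℕ) : List (Fin n) :=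
  Finset.sort ((univ.filter fun k : Fin n => k.val < i).image w) (· ≤ ·)

/-!
Write `M = R ∪ {(i₁,i₃), (i₂,i₄)}`; the uncrossed matching is `R ∪ {(i₁,i₄), (i₂,i₃)}`.
Crossings inside `R` are common to both. The old pair of arcs crosses, the new pair is nested.
Finally, any arc `x` crosses the two new arcs at most as often as the two old ones, which is
a finite check on the positions of the endpoints of `x` relative to `i₁ < i₂ < i₃ < i₄`.
-/

section CrossingIndicator

variable {α : Type*} [LinearOrder α]

def crossInd (x y : α × α) : ℕ := if x.1 < y.1 ∧ y.1 < x.2 ∧ x.2 < y.2 then 1 else 0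

theorem crossInd_uncross_le (x : α × α) {i₁ i₂ i₃ i₄ : α}
    (h₁₂ : i₁ < i₂) (h₂₃ : i₂ < i₃) (h₃₄ : i₃ < i₄) :
    crossInd x (i₁, i₄) + crossInd x (i₂, i₃) + crossInd (i₁, i₄) x + crossInd (i₂, i₃) x ≤
      crossInd x (i₁, i₃) + crossInd x (i₂, i₄) + crossInd (i₁, i₃) x + crossInd (i₂, i₄) x := by
  obtain ⟨s, t⟩ := x
  simp only [crossInd]
  split_ifs <;> grind

theorem crossInd_nested_pair {i₁ i₂ i₃ i₄ : α} (h₁₂ : i₁ < i₂) (h₃₄ : i₃ < i₄) :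
    crossInd (i₁, i₄) (i₁, i₄) + crossInd (i₁, i₄) (i₂, i₃) + crossInd (i₂, i₃) (i₁, i₄) +
      crossInd (i₂, i₃) (i₂, i₃) = 0 := by
  simp only [crossInd]
  split_ifs <;> grind

theorem crossInd_crossing_pair {i₁ i₂ i₃ i₄ : α}
    (h₁₂ : i₁ < i₂) (h₂₃ : i₂ < i₃) (h₃₄ : i₃ < i₄) :
    crossInd (i₁, i₃) (i₁, i₃) + crossInd (i₁, i₃) (i₂, i₄) + crossInd (i₂, i₄) (i₁, i₃) +
      crossInd (i₂, i₄) (i₂, i₄) = 1 := by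
  simp only [crossInd]
  split_ifs <;> grind

end CrossingIndicator

theorem Finset.sum_sum_union_pair {ι β : Type*} [DecidableEq ι] [AddCommMonoid β]
    {R : Finset ι} {u v : ι} (hu : u ∉ R) (hv : v ∉ R) (huv : u ≠ v) (f : ι → ι → β) :
    ∑ x ∈ R ∪ {u, v}, ∑ y ∈ R ∪ {u, v}, f x y =
      ∑ x ∈ R, ∑ y ∈ R, f x y + ∑ x ∈ R, (f x u + f x v + f u x + f v x) +
        (f u u + f u v + f v u + f v v) := by
  have hu' : u ∉ insert v R := by simp [huv, hu]
  simp only [union_insert, union_singleton, sum_insert hu', sum_insert hv, sum_add_distrib]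
  abel

theorem crossNum_eq_sum_sum {n : ℕ} (M : Finset (Fin n × Fin n)) :
    crossNum M = ∑ x ∈ M, ∑ y ∈ M, crossInd x y := by
  simp only [crossNum, card_filter, sum_product, crossInd]

theorem IsPartialMatching.eq_of_fst_eq {n : ℕ} {M : Finset (Fin n × Fin n)}
    (hM : IsPartialMatching M) {a b : Fin n × Fin n} (ha : a ∈ M) (hb : b ∈ M)
    (h : a.1 = b.1) : a = b := by
  by_contra hne
  exact (hM.2 a ha b hb hne).1 h

/-- Uncrossing a crossing pair of arcs of a partial matching
(replacing arcs `(i1,i3)`, `(i2,i4)`, `i1<i2<i3<i4`, by `(i1,i4)`, `(i2,i3)`)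
strictly decreases the number of crossing pairs of arcs. -/
theorem crossNum_lt_of_uncross {n : ℕ} (M : Finset (Fin n × Fin n))
    (hM : IsPartialMatching M) (i1 i2 i3 i4 : Fin n)
    (h12 : i1 < i2) (h23 : i2 < i3) (h34 : i3 < i4)
    (ha : (i1, i3) ∈ M) (hb : (i2, i4) ∈ M) :
    crossNum ((M \ {(i1, i3), (i2, i4)}) ∪ {(i1, i4), (i2, i3)}) < crossNum M := by
  set R := M \ {(i1, i3), (i2, i4)}
  have hM_eq : R ∪ {(i1, i3), (i2, i4)} = M :=
    sdiff_union_of_subset (by simp [insert_subset_iff, ha, hb])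
  have hA' : (i1, i4) ∉ R := fun h =>
    h34.ne' (congrArg Prod.snd (hM.eq_of_fst_eq (mem_sdiff.1 h).1 ha rfl))
  have hB' : (i2, i3) ∉ R := fun h =>
    h34.ne (congrArg Prod.snd (hM.eq_of_fst_eq (mem_sdiff.1 h).1 hb rfl))
  have hA : (i1, i3) ∉ R := by simp [R]
  have hB : (i2, i4) ∉ R := by simp [R]
  have hfst_ne : ∀ {j k : Fin n}, (i1, j) ≠ (i2, k) := fun h => h12.ne (congrArg Prod.fst h)
  rw [← hM_eq, crossNum_eq_sum_sum, crossNum_eq_sum_sum,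
    sum_sum_union_pair hA' hB' hfst_ne, sum_sum_union_pair hA hB hfst_ne,
    crossInd_nested_pair h12 h34, crossInd_crossing_pair h12 h23 h34]
  have h_rest := sum_le_sum fun x (_ : x ∈ R) => crossInd_uncross_le x h12 h23 h34
  omega
end
end

section
/- Let γ be a (p,q)-clan, n = p+q, and let W⁺ = { w ∈ S_n : r_w(i,p) = γ(i;+) for all i = 1,…,n }. Then u(γ) ∈ W⁺, and u(γ) is the unique maximal element of W⁺ in the Bruhat order; that is, for every w ∈ W⁺ and all i,j ∈ {1,…,n} one has r_w(i,j) ≥ r_{u(γ)}(i,j). -/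
open Finset Module

noncomputable section

/-! For any permutation `w` of `{1,…,n}`, split the first `i` positions according to whether
`w(k) ≤ p`. With `a = r_w(i,p)` positions of the first kind and `i - a` of the second,
injectivity forces at least `(a - (p - j)) + ((i - a) - (n - j))` of them to take values `≤ j`.
The permutation `u(γ)` attains this bound, because it sends the `γ₊`-positions among the first
`i` to the top of `[1, p]` and the `γ₋`-positions to the top of `[p + 1, n]`. Since
`r_u(i,p) = γ(i;+) = r_w(i,p)` for `w ∈ W⁺`, this gives `r_u(i,j) ≤ r_w(i,j)`. -/

section PackedValues

variable {α : Type*} {s : Finset α} {f : α → ℕ}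

lemma card_le_sub_of_injOn_of_mem_Ico (hf : Set.InjOn f s) {a b : ℕ}
    (h : ∀ k ∈ s, f k ∈ Ico a b) : #s ≤ b - a :=
  (card_le_card_of_injOn f h hf).trans (Nat.card_Ico a b).le

lemma card_filter_eq_card_filter_add_card_filter (P Q : α → Prop) [DecidablePred P]
    [DecidablePred Q] :
    #(s.filter P) = #((s.filter Q).filter P) + #((s.filter (¬ Q ·)).filter P) := by
  rw [filter_comm Q, filter_comm (¬ Q ·)]
  exact (card_filter_add_card_filter_not _).symm

lemma card_sub_le_card_filter_lt (hf : Set.InjOn f s) {M : ℕ} (hM : ∀ k ∈ s, f k < M)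
    (j : ℕ) : #s - (M - j) ≤ #(s.filter (f · < j)) := by
  have hge : #(s.filter (¬ f · < j)) ≤ M - j :=
    card_le_sub_of_injOn_of_mem_Ico (hf.mono (filter_subset _ s)) fun k hk => by
      rw [mem_filter] at hk
      exact mem_Ico.2 ⟨not_lt.1 hk.2, hM k hk.1⟩
  have := card_filter_add_card_filter_not (s := s) (f · < j)
  omega

lemma card_filter_lt_le_sub (hf : Set.InjOn f s) {L : ℕ} (hL : ∀ k ∈ s, L ≤ f k) (j : ℕ) :
    #(s.filter (f · < j)) ≤ j - L :=
  card_le_sub_of_injOn_of_mem_Ico (hf.mono (filter_subset _ s)) fun k hk => by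
    rw [mem_filter] at hk
    exact mem_Ico.2 ⟨hL k hk.1, hk.2⟩

lemma card_filter_lt_ge (hf : Set.InjOn f s) {M : ℕ} (hM : ∀ k ∈ s, f k < M) (m j : ℕ) :
    (#(s.filter (f · < m)) - (m - j)) + (#(s.filter (¬ f · < m)) - (M - j))
      ≤ #(s.filter (f · < j)) := by
  have hlow := card_sub_le_card_filter_lt (hf.mono (filter_subset (f · < m) s))
    (fun k hk => (mem_filter.1 hk).2) j
  have hhigh := card_sub_le_card_filter_lt (hf.mono (filter_subset (¬ f · < m) s))
    (fun k hk => hM k (mem_filter.1 hk).1) j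
  rw [card_filter_eq_card_filter_add_card_filter (f · < j) (f · < m)]
  omega

lemma card_filter_lt_le_of_packed (hf : Set.InjOn f s) {m M j : ℕ} (hj : j ≤ M)
    (hlow : ∀ k ∈ s, f k < m → m - #(s.filter (f · < m)) ≤ f k)
    (hhigh : ∀ k ∈ s, ¬ f k < m → M - #(s.filter (¬ f · < m)) ≤ f k) :
    #(s.filter (f · < j))
      ≤ (#(s.filter (f · < m)) - (m - j)) + (#(s.filter (¬ f · < m)) - (M - j)) := by
  have hm : #(s.filter (f · < m)) ≤ m := by
    simpa using card_filter_lt_le_sub hf (fun _ _ => Nat.zero_le _) m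
  have hlow' := card_filter_lt_le_sub (hf.mono (filter_subset (f · < m) s))
    (fun k hk => hlow k (mem_filter.1 hk).1 (mem_filter.1 hk).2) j
  have hhigh' := card_filter_lt_le_sub (hf.mono (filter_subset (¬ f · < m) s))
    (fun k hk => hhigh k (mem_filter.1 hk).1 (mem_filter.1 hk).2) j
  have h₁ := card_filter_le (s.filter (f · < m)) (f · < j)
  have h₂ := card_filter_le (s.filter (¬ f · < m)) (f · < j)
  rw [card_filter_eq_card_filter_add_card_filter (f · < j) (f · < m)]
  omega

end PackedValues

section RankMatrix

variable {n : ℕ} (w : Equiv.Perm (Fin n))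

lemma rankMatrix_eq_card_filter (i j : ℕ) :
    rankMatrix w i j
      = #((univ.filter fun k : Fin n => k.val < i).filter (fun k => (w k).val < j)) := by
  rw [filter_filter]; rfl

lemma card_filter_not_lt_eq_sub_rankMatrix {i : ℕ} (hi : i ≤ n) (m : ℕ) :
    #((univ.filter fun k : Fin n => k.val < i).filter (fun k => ¬ (w k).val < m))
      = i - rankMatrix w i m := by
  have := card_filter_add_card_filter_not (s := univ.filter fun k : Fin n => k.val < i)
    (fun k => (w k).val < m)
  rw [Fin.card_filter_val_lt, min_eq_right hi] at this
  rw [rankMatrix_eq_card_filter]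
  omega

lemma injOn_val_comp_perm (s : Set (Fin n)) :
    s.InjOn fun k => (w k).val :=
  (Fin.val_injective.comp w.injective).injOn

lemma rankMatrix_ge {i : ℕ} (hi : i ≤ n) (m j : ℕ) :
    (rankMatrix w i m - (m - j)) + ((i - rankMatrix w i m) - (n - j)) ≤ rankMatrix w i j := by
  rw [← card_filter_not_lt_eq_sub_rankMatrix w hi, rankMatrix_eq_card_filter,
    rankMatrix_eq_card_filter]
  exact card_filter_lt_ge (injOn_val_comp_perm w _) (fun k _ => (w k).isLt) m j

end RankMatrix

namespace Clan

variable {p q : ℕ} (γ : Clan p q)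

lemma notMem_plusSet_iff (k : Fin (p + q)) :
    k ∉ γ.plusSet ↔
      γ.symbol k = Sum.inr false ∨ ∃ j, γ.symbol k = Sum.inl j ∧ k < j := by
  rcases h : γ.symbol k with j | b
  · have := γ.mate_ne k j h
    simp only [plusSet, mem_filter, mem_univ, h, true_and, reduceCtorEq, false_or,
      Sum.inl.injEq, exists_eq_left', not_lt]
    omega
  · cases b <;> simp [plusSet, h]

/-- The mate of a matched position (junk value: the position itself when it carries a sign). -/
def mate (i : Fin (p + q)) : Fin (p + q) :=
  (γ.symbol i).elim id fun _ => i

lemma mate_eq {i j : Fin (p + q)} (h : γ.symbol i = Sum.inl j) : γ.mate i = j := by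
  simp [mate, h]

lemma card_closers_eq_card_openers :
    #(univ.filter fun i => ∃ j, γ.symbol i = Sum.inl j ∧ j < i)
      = #(univ.filter fun i => ∃ j, γ.symbol i = Sum.inl j ∧ i < j) := by
  have maps : ∀ {i : Fin (p + q)} (R : Fin (p + q) → Fin (p + q) → Prop),
      (∃ j, γ.symbol i = Sum.inl j ∧ R j i) →
        ∃ j, γ.symbol (γ.mate i) = Sum.inl j ∧ R (γ.mate i) j :=
    fun R ⟨j, hj, hR⟩ =>
      ⟨_, (γ.mate_eq hj).symm ▸ γ.mate_invol _ _ hj, by rwa [γ.mate_eq hj]⟩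
  have invol : ∀ {i : Fin (p + q)} (R : Fin (p + q) → Fin (p + q) → Prop),
      (∃ j, γ.symbol i = Sum.inl j ∧ R j i) → γ.mate (γ.mate i) = i :=
    fun R ⟨j, hj, _⟩ => by rw [γ.mate_eq hj, γ.mate_eq (γ.mate_invol _ _ hj)]
  refine card_nbij' γ.mate γ.mate (fun i hi => ?_) (fun i hi => ?_) (fun i hi => ?_)
    (fun i hi => ?_) <;> simp only [coe_filter, mem_univ, true_and, Set.mem_ofPred_eq] at hi ⊢
  · exact maps (· < ·) hi
  · exact maps (fun j i => i < j) hi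
  · exact invol (· < ·) hi
  · exact invol (fun j i => i < j) hi

lemma card_plusSet : #γ.plusSet = p := by
  have hplus : #γ.plusSet = #(univ.filter fun i => γ.symbol i = Sum.inr true)
      + #(univ.filter fun i => ∃ j, γ.symbol i = Sum.inl j ∧ j < i) := by
    rw [plusSet, filter_or, card_union_of_disjoint]
    exact disjoint_filter.2 fun k _ h ⟨j, hj, _⟩ => by simp [h] at hj
  have hminus : #γ.plusSetᶜ = #(univ.filter fun i => γ.symbol i = Sum.inr false)
      + #(univ.filter fun i => ∃ j, γ.symbol i = Sum.inl j ∧ i < j) := by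
    rw [← card_union_of_disjoint
      (disjoint_filter.2 fun k _ h ⟨j, hj, _⟩ => by simp [h] at hj), ← filter_or]
    congr 1
    ext k
    simp only [mem_compl, mem_filter, mem_univ, true_and, notMem_plusSet_iff]
  have htotal := card_add_card_compl γ.plusSet
  rw [Fintype.card_fin] at htotal
  have := γ.card_closers_eq_card_openers
  have := γ.balance
  omega

end Clan

namespace IsUPerm

variable {p q : ℕ} {γ : Clan p q} {u : Equiv.Perm (Fin (p + q))} (hu : IsUPerm γ u)
include hu

lemma val_lt_iff (k : Fin (p + q)) : (u k).val < p ↔ k ∈ γ.plusSet := by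
  refine ⟨fun hk => ?_, fun hk => by have := (hu k).1 hk; omega⟩
  by_contra hkγ
  have hval := (hu k).2 hkγ
  have hbefore : #(univ.filter fun j => j ∉ γ.plusSet ∧ j < k) < #γ.plusSetᶜ :=
    card_lt_card ⟨fun j hj => mem_compl.2 (mem_filter.1 hj).2.1,
      fun h => by simpa using h (mem_compl.2 hkγ)⟩
  have htotal := card_add_card_compl γ.plusSet
  rw [Fintype.card_fin, γ.card_plusSet] at htotal
  omega

lemma rankMatrix_p (i : ℕ) : rankMatrix u i p = γ.cplus i := by
  unfold rankMatrix Clan.cplus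
  congr 1
  refine filter_congr fun k _ => ?_
  rw [hu.val_lt_iff]
  simp [Clan.plusSet]

lemma sub_rankMatrix_le_of_lt {i : ℕ} {k : Fin (p + q)} (hki : k.val < i) (hk : (u k).val < p) :
    p - rankMatrix u i p ≤ (u k).val := by
  have hkγ := (hu.val_lt_iff k).1 hk
  have hbefore : #(γ.plusSet.filter (· < k)) < rankMatrix u i p :=
    card_lt_card ⟨fun j hj => by
        rw [mem_filter] at hj ⊢
        exact ⟨mem_univ j, by omega, (hu.val_lt_iff j).2 hj.1⟩,
      fun h => by simpa using h (mem_filter.2 ⟨mem_univ k, hki, hk⟩)⟩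
  have := (hu k).1 hkγ
  omega

lemma sub_rankMatrix_le_of_not_lt {i : ℕ} (hi : i ≤ p + q) {k : Fin (p + q)} (hki : k.val < i)
    (hk : ¬ (u k).val < p) : p + q - (i - rankMatrix u i p) ≤ (u k).val := by
  have hkγ : k ∉ γ.plusSet := (hu.val_lt_iff k).not.1 hk
  have hbefore : #(univ.filter fun j => j ∉ γ.plusSet ∧ j < k) < i - rankMatrix u i p := by
    rw [← card_filter_not_lt_eq_sub_rankMatrix u hi, filter_filter]
    exact card_lt_card ⟨fun j hj => by
        rw [mem_filter] at hj ⊢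
        exact ⟨mem_univ j, by omega, (hu.val_lt_iff j).not.2 hj.2.1⟩,
      fun h => by simpa using h (mem_filter.2 ⟨mem_univ k, hki, hk⟩)⟩
  have := (hu k).2 hkγ
  omega

lemma rankMatrix_le {i j : ℕ} (hi : i ≤ p + q) (hj : j ≤ p + q) :
    rankMatrix u i j
      ≤ (rankMatrix u i p - (p - j)) + ((i - rankMatrix u i p) - (p + q - j)) := by
  have hlow := fun k (hk : k ∈ univ.filter fun k : Fin (p + q) => k.val < i) =>
    hu.sub_rankMatrix_le_of_lt (mem_filter.1 hk).2
  have hhigh := fun k (hk : k ∈ univ.filter fun k : Fin (p + q) => k.val < i) =>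
    hu.sub_rankMatrix_le_of_not_lt hi (mem_filter.1 hk).2
  rw [← card_filter_not_lt_eq_sub_rankMatrix u hi] at hhigh ⊢
  simp only [rankMatrix_eq_card_filter] at hlow ⊢
  exact card_filter_lt_le_of_packed (injOn_val_comp_perm u _) hj hlow hhigh

end IsUPerm

theorem uPerm_max_of_Wplus_general {p q : ℕ} (γ : Clan p q)
    (u : Equiv.Perm (Fin (p + q))) (hu : IsUPerm γ u) :
    (∀ i : ℕ, 1 ≤ i → i ≤ p + q → rankMatrix u i p = γ.cplus i) ∧
    (∀ w : Equiv.Perm (Fin (p + q)),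
      (∀ i : ℕ, 1 ≤ i → i ≤ p + q → rankMatrix w i p = γ.cplus i) →
      ∀ i j : ℕ, 1 ≤ i → i ≤ p + q → 1 ≤ j → j ≤ p + q →
        rankMatrix u i j ≤ rankMatrix w i j) := by
  refine ⟨fun i _ _ => hu.rankMatrix_p i, fun w hw i j hi₁ hi _ hj => ?_⟩
  calc rankMatrix u i j
      ≤ (rankMatrix u i p - (p - j)) + ((i - rankMatrix u i p) - (p + q - j)) :=
        hu.rankMatrix_le hi hj
    _ = (rankMatrix w i p - (p - j)) + ((i - rankMatrix w i p) - (p + q - j)) := by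
        rw [hw i hi₁ hi, hu.rankMatrix_p]
    _ ≤ rankMatrix w i j := rankMatrix_ge w hi p j

/-- `u(γ)` lies in
`W⁺ = {w : r_w(i,p) = γ(i;+) for all i}` and is its unique maximal element in
the Bruhat order: every `w ∈ W⁺` satisfies `r_w(i,j) ≥ r_{u(γ)}(i,j)`. -/
theorem uPerm_max_of_Wplus {p q : ℕ} (hn : 1 ≤ p + q) (γ : Clan p q)
    (u : Equiv.Perm (Fin (p + q))) (hu : IsUPerm γ u) :
    (∀ i : ℕ, 1 ≤ i → i ≤ p + q → rankMatrix u i p = γ.cplus i) ∧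
    (∀ w : Equiv.Perm (Fin (p + q)),
      (∀ i : ℕ, 1 ≤ i → i ≤ p + q → rankMatrix w i p = γ.cplus i) →
      ∀ i j : ℕ, 1 ≤ i → i ≤ p + q → 1 ≤ j → j ≤ p + q →
        rankMatrix u i j ≤ rankMatrix w i j) :=
  uPerm_max_of_Wplus_general γ u hu
end
end

section
/- Let n = p+q, let a ∈ S_n be a shuffle of (p,p−1,…,1) and (n,n−1,…,p+1) (i.e. the subsequence of values of a(1),…,a(n) that are ≤ p is p,p−1,…,1 and the subsequence of values > p is n,n−1,…,p+1), and let b ∈ S_n be a shuffle of (1,…,p) and (p+1,…,n) (i.e. the subsequence of values of b(1),…,b(n) that are ≤ p is 1,2,…,p and the subsequence of values > p is p+1,…,n). Then a ≥ b in the Bruhat order if and only if for every i ∈ {1,…,n}, #{ j ≤ i : a(j) > p and b(j) ≤ p } ≥ #{ j ≤ i : a(j) ≤ p and b(j) > p }. -/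
open Finset Module

noncomputable section

/-! Let `A(i)`, `B(i)` count the values `≤ p` among the first `i` values of `a`, `b`; the condition
at `i` says exactly `A(i) ≤ B(i)`, i.e. `r_a(i,p) ≤ r_b(i,p)`, so it is the rank condition in column
`p`. The other columns follow from this one. For `j ≤ p`: at most `p - j` values lie in `(j, p]`,
so `r_b(i,j) ≥ r_b(i,p) - (p - j)`; and since `a` lists its small values decreasingly, as soon
as some value `≤ j` occurs among `a(1),…,a(i)` all of `(j, p]` does, so
`r_a(i,j) = r_a(i,p) - (p - j)`.
For `j ≥ p` the argument is symmetric, using that `b` lists its large values increasingly. -/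

namespace Equiv.Perm

variable {n : ℕ}

theorem rankMatrix_add_card_prefix_mem_Ico (w : Perm (Fin n)) (i : ℕ) {c d : ℕ}
    (hcd : c ≤ d) :
    rankMatrix w i c + #{k | k.val < i ∧ c ≤ (w k).val ∧ (w k).val < d} = rankMatrix w i d := by
  rw [rankMatrix, rankMatrix, ← card_filter_add_card_filter_not
    (s := {k | k.val < i ∧ (w k).val < d}) (fun k => (w k).val < c)]
  congr 2 <;> ext k <;> simp only [mem_filter, mem_univ, true_and] <;> omega

theorem card_prefix_mem_Ico_le (w : Perm (Fin n)) (i c d : ℕ) :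
    #{k | k.val < i ∧ c ≤ (w k).val ∧ (w k).val < d} ≤ d - c := by
  rw [← Nat.card_Ico c d]
  refine card_le_card_of_injOn (fun k => (w k).val) (fun k hk => ?_)
    (fun k _ k' _ h => w.injective (Fin.ext h))
  simp only [coe_filter, mem_univ, true_and, Set.mem_ofPred_eq] at hk
  simp [hk.2]

theorem le_card_prefix_mem_Ico_of_forall_symm_lt (w : Perm (Fin n)) (i : ℕ) {c d : ℕ}
    (hd : d ≤ n)
    (hcover : ∀ v : Fin n, c ≤ v.val → v.val < d → (w.symm v).val < i) :
    d - c ≤ #{k | k.val < i ∧ c ≤ (w k).val ∧ (w k).val < d} := by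
  rw [← Nat.card_Ico c d]
  refine card_le_card_of_surjOn (fun k => (w k).val) fun v hv => ?_
  rw [coe_Ico, Set.mem_Ico] at hv
  have hvn : v < n := by omega
  exact ⟨w.symm ⟨v, hvn⟩, by simpa using ⟨hcover ⟨v, hvn⟩ hv.1 hv.2, hv⟩, by simp⟩

theorem card_and_not_le_iff_rankMatrix_le (u w : Perm (Fin n)) (i p : ℕ) :
    #{k | k.val < i ∧ (u k).val < p ∧ p ≤ (w k).val}
        ≤ #{k | k.val < i ∧ p ≤ (u k).val ∧ (w k).val < p}
      ↔ rankMatrix u i p ≤ rankMatrix w i p := by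
  have hu := card_filter_add_card_filter_not (s := {k | k.val < i ∧ (u k).val < p})
    (fun k => (w k).val < p)
  have hw := card_filter_add_card_filter_not (s := {k | k.val < i ∧ (w k).val < p})
    (fun k => (u k).val < p)
  simp only [filter_filter, not_lt, and_assoc] at hu hw
  have hboth : #{k | k.val < i ∧ (u k).val < p ∧ (w k).val < p}
      = #{k | k.val < i ∧ (w k).val < p ∧ (u k).val < p} := by
    congr 1; ext; simp only [mem_filter]; tauto
  have hwu : #{k | k.val < i ∧ (w k).val < p ∧ p ≤ (u k).val}
      = #{k | k.val < i ∧ p ≤ (u k).val ∧ (w k).val < p} := by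
    congr 1; ext; simp only [mem_filter]; tauto
  rw [rankMatrix, rankMatrix]
  omega

theorem symm_lt_of_strictAntiOn {w : Perm (Fin n)} {p : ℕ}
    (hw : StrictAntiOn w {k | (w k).val < p}) {k₀ v : Fin n} (hv : v.val < p) (hlt : w k₀ < v) :
    w.symm v < k₀ :=
  (hw.lt_iff_gt (show (w k₀).val < p by omega) (by simpa using hv)).mp (by simpa using hlt)

theorem symm_lt_of_strictMonoOn {w : Perm (Fin n)} {p : ℕ}
    (hw : StrictMonoOn w {k | p ≤ (w k).val}) {k₀ v : Fin n} (hv : p ≤ v.val) (hlt : v < w k₀) :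
    w.symm v < k₀ :=
  (hw.lt_iff_lt (by simpa using hv) (show p ≤ (w k₀).val by omega)).mp (by simpa using hlt)

theorem rankMatrix_le_of_strictAntiOn {u w : Perm (Fin n)} {p i j : ℕ} (hp : p ≤ n)
    (hu : StrictAntiOn u {k | (u k).val < p}) (hjp : j ≤ p)
    (hr : rankMatrix u i p ≤ rankMatrix w i p) : rankMatrix u i j ≤ rankMatrix w i j := by
  rcases Finset.eq_empty_or_nonempty {k | k.val < i ∧ (u k).val < j} with hempty | ⟨k₀, hk₀⟩
  · simp [rankMatrix, hempty]
  simp only [mem_filter, mem_univ, true_and] at hk₀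
  have hcover (v : Fin n) (hjv : j ≤ v.val) (hvp : v.val < p) : (u.symm v).val < i :=
    lt_trans (symm_lt_of_strictAntiOn hu hvp (by rw [Fin.lt_def]; omega)) hk₀.1
  have hu_split := rankMatrix_add_card_prefix_mem_Ico u i hjp
  have hu_full := le_card_prefix_mem_Ico_of_forall_symm_lt u i hp hcover
  have hw_split := rankMatrix_add_card_prefix_mem_Ico w i hjp
  have hw_bound := card_prefix_mem_Ico_le w i j p
  omega

theorem rankMatrix_le_of_strictMonoOn {u w : Perm (Fin n)} {p i j : ℕ}
    (hw : StrictMonoOn w {k | p ≤ (w k).val}) (hpj : p ≤ j)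
    (hr : rankMatrix u i p ≤ rankMatrix w i p) : rankMatrix u i j ≤ rankMatrix w i j := by
  by_cases hbig : ∃ k₀ : Fin n, k₀.val < i ∧ j ≤ (w k₀).val
  · obtain ⟨k₀, hk₀i, hk₀j⟩ := hbig
    have hcover (v : Fin n) (hpv : p ≤ v.val) (hvj : v.val < j) : (w.symm v).val < i :=
      lt_trans (symm_lt_of_strictMonoOn hw hpv (by rw [Fin.lt_def]; omega)) hk₀i
    have hw_split := rankMatrix_add_card_prefix_mem_Ico w i hpj
    have hw_full := le_card_prefix_mem_Ico_of_forall_symm_lt w i (by omega) hcover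
    have hu_split := rankMatrix_add_card_prefix_mem_Ico u i hpj
    have hu_bound := card_prefix_mem_Ico_le u i p j
    omega
  · push Not at hbig
    calc rankMatrix u i j ≤ #{k : Fin n | k.val < i} := card_le_card (by intro k; simp_all)
      _ = rankMatrix w i j := by
        rw [rankMatrix]; congr 1; ext k; simpa using fun hk => hbig k hk

end Equiv.Perm

/-- Let `a` be a shuffle of `(p,…,1)` and `(n,…,p+1)` and let
`b` be a shuffle of `(1,…,p)` and `(p+1,…,n)` (values are `0`-based, so
"value `≤ p`" reads `val < p`).  Then `a ≥ b` in the Bruhat order (i.e.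
`r_a(i,j) ≤ r_b(i,j)` for all `i,j`) iff for every `i`, the number of
positions `k ≤ i` with `a(k) > p` and `b(k) ≤ p` is at least the number of
positions `k ≤ i` with `a(k) ≤ p` and `b(k) > p`. -/
theorem shuffle_bruhat_iff_HL {p q : ℕ} (a b : Equiv.Perm (Fin (p + q)))
    (ha : ∀ i j : Fin (p + q), i < j →
      ((a i).val < p → (a j).val < p → (a j).val < (a i).val) ∧
      (p ≤ (a i).val → p ≤ (a j).val → (a j).val < (a i).val))
    (hb : ∀ i j : Fin (p + q), i < j →
      ((b i).val < p → (b j).val < p → (b i).val < (b j).val) ∧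
      (p ≤ (b i).val → p ≤ (b j).val → (b i).val < (b j).val)) :
    (∀ i j : ℕ, 1 ≤ i → i ≤ p + q → 1 ≤ j → j ≤ p + q →
        rankMatrix a i j ≤ rankMatrix b i j)
      ↔ ∀ i : ℕ, 1 ≤ i → i ≤ p + q →
          (univ.filter fun k : Fin (p + q) =>
            k.val < i ∧ (a k).val < p ∧ p ≤ (b k).val).card
            ≤ (univ.filter fun k : Fin (p + q) =>
                k.val < i ∧ p ≤ (a k).val ∧ (b k).val < p).card := by
  have ha_low : StrictAntiOn a {k | (a k).val < p} :=
    fun k hk k' hk' hlt => (ha k k' hlt).1 hk hk'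
  have hb_high : StrictMonoOn b {k | p ≤ (b k).val} :=
    fun k hk k' hk' hlt => (hb k k' hlt).2 hk hk'
  simp only [Equiv.Perm.card_and_not_le_iff_rankMatrix_le]
  constructor
  · intro hrank i hi hin
    rcases Nat.eq_zero_or_pos p with rfl | hp
    · simp [rankMatrix]
    · exact hrank i p hi hin hp (Nat.le_add_right p q)
  · intro hcol i j hi hin _ _
    rcases le_total j p with hjp | hpj
    · exact Equiv.Perm.rankMatrix_le_of_strictAntiOn (Nat.le_add_right p q) ha_low hjp
        (hcol i hi hin)
    · exact Equiv.Perm.rankMatrix_le_of_strictMonoOn hb_high hpj (hcol i hi hin)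
end
end

section
/- Let p,q ≥ 0, n = p+q ≥ 1. For every (p,q)-clan γ, the set Q_γ of complete flags in ℂⁿ is nonempty; that is, there exists a complete flag F with dim(F_i ∩ E_p) = γ(i;+) and dim(F_i ∩ Ẽ_q) = γ(i;−) for all 1 ≤ i ≤ n, and dim(π(F_i) + F_j) = j + γ(i;j) for all 1 ≤ i < j ≤ n. -/
open Finset Module

noncomputable section

/-!
Send the positions carrying `+` or opening an arc bijectively to the first `p` coordinates
(`posCoord`, written `a` here) and those carrying `−` or opening an arc bijectively to the last `q`
coordinates (`negCoord`, written `b`). Put `w_k = e_{a k}` at a `+`, `w_k = e_{b k}` at a `−`, and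
`w_s = e_{a s} + e_{b s}`, `w_t = e_{b s}` on an arc `(s, t)`. Then `F_i = span (w_1, …, w_i)` is in
`Q_γ`.

The `w_k` span `ℂⁿ`, so they form a basis and `dim F_i = i`. Each of `F_i ∩ E_p` and `F_i ∩ Ẽ_q`
contains a coordinate subspace `W`, and the corresponding sum `F_i + E_p` (resp. `F_i + Ẽ_q`)
contains a coordinate subspace `U` with `dim U + dim W = i + p` (resp. `i + q`). Grassmann's formula
then forces the intersection to equal `W`. Finally, `π(F_i) + F_j` is `F_j` plus the span of the
`e_{a s}` over the arcs `(s, t)` with `s ≤ i < j < t`. This sum is direct: by the above, `F_j ∩ E_p`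
is spanned by the `e_{a k}` with `k` a `+` or the opener of an arc closing by `j`.
-/

open Submodule

theorem Finset.exists_perm_apply_mem_iff {α : Type*} [Fintype α] [DecidableEq α]
    (s t : Finset α) (h : s.card = t.card) :
    ∃ σ : Equiv.Perm α, ∀ x, σ x ∈ t ↔ x ∈ s := by
  let e₁ : {x // x ∈ s} ≃ {x // x ∈ t} := Fintype.equivOfCardEq (by simpa using h)
  let e₂ : {x // x ∉ s} ≃ {x // x ∉ t} :=
    Fintype.equivOfCardEq (by simp [Fintype.card_subtype_compl, h])
  refine ⟨Equiv.subtypeCongr e₁ e₂, fun x => ?_⟩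
  by_cases hx : x ∈ s
  · simp [Equiv.subtypeCongr, hx]
  · simpa [Equiv.subtypeCongr, hx] using (e₂ ⟨x, hx⟩).2

theorem Fin.exists_perm_val_lt_iff_mem {n m : ℕ} (s : Finset (Fin n)) (hs : s.card = m) :
    ∃ σ : Equiv.Perm (Fin n), ∀ x, (σ x).val < m ↔ x ∈ s := by
  have := s.card_le_univ
  rw [Fintype.card_fin] at this
  obtain ⟨σ, hσ⟩ := s.exists_perm_apply_mem_iff (univ.filter (·.val < m))
    (by rw [Fin.card_filter_val_lt]; omega)
  exact ⟨σ, fun x => by simpa using hσ x⟩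

theorem Finset.card_filter_val_lt_add_card_compl {n : ℕ} (s : Finset (Fin n)) {i : ℕ}
    (hi : i ≤ n) : (s.filter (·.val < i)).card + (sᶜ.filter (·.val < i)).card = i := by
  rw [← card_union_of_disjoint (disjoint_filter_filter disjoint_compl_right), ← filter_union,
    union_compl, Fin.card_filter_val_lt, min_eq_right hi]

theorem LinearIndependent.finrank_span_image_finset {K V ι : Type*} [DivisionRing K]
    [AddCommGroup V] [Module K V] {v : ι → V} (hv : LinearIndependent K v) (s : Finset ι) :
    finrank K (span K (v '' s)) = s.card := by
  rw [Set.image_eq_range]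
  exact (finrank_span_eq_card (hv.comp ((↑) : s → ι) Subtype.val_injective)).trans
    (Fintype.card_coe s)

theorem Submodule.eq_inf_of_le_sup_of_le_inf {K V : Type*} [DivisionRing K] [AddCommGroup V]
    [Module K V] [FiniteDimensional K V] {U W F E : Submodule K V} (hU : U ≤ F ⊔ E)
    (hW : W ≤ F ⊓ E) (h : finrank K F + finrank K E ≤ finrank K U + finrank K W) :
    W = F ⊓ E := by
  refine eq_of_le_of_finrank_le hW ?_
  have := finrank_sup_add_finrank_inf_eq F E
  have := Submodule.finrank_mono hU
  omega

section coordSpan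

variable (K : Type*) {ι : Type*} [DivisionRing K] [DecidableEq ι]

def coordSpan (s : Finset ι) : Submodule K (ι → K) :=
  span K ((Pi.single · 1) '' s)

variable {K}

theorem single_mem_coordSpan {s : Finset ι} {c : ι} (hc : c ∈ s) :
    Pi.single c 1 ∈ coordSpan K s :=
  subset_span ⟨c, hc, rfl⟩

theorem coordSpan_le_iff {s : Finset ι} {W : Submodule K (ι → K)} :
    coordSpan K s ≤ W ↔ ∀ c ∈ s, Pi.single c 1 ∈ W := by
  simp [coordSpan, span_le, Set.subset_def]

variable [Finite ι]

theorem coordSpan_eq_span_basisFun (s : Finset ι) :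
    coordSpan K s = span K (Pi.basisFun K ι '' s) := by
  simp only [coordSpan, Pi.basisFun_apply]

theorem finrank_coordSpan (s : Finset ι) : finrank K (coordSpan K s) = s.card := by
  rw [coordSpan_eq_span_basisFun, (Pi.basisFun K ι).linearIndependent.finrank_span_image_finset]

theorem disjoint_coordSpan {s t : Finset ι} (h : Disjoint s t) :
    Disjoint (coordSpan K s) (coordSpan K t) := by
  rw [coordSpan_eq_span_basisFun, coordSpan_eq_span_basisFun]
  exact (Pi.basisFun K ι).linearIndependent.disjoint_span_image (by exact_mod_cast h)

end coordSpan

theorem single_mem_Efirst {n j : ℕ} {c : Fin n} (hc : c.val < j) :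
    Pi.single c (1 : ℂ) ∈ Efirst n j := by
  simp only [Efirst, mem_iInf, LinearMap.mem_ker, LinearMap.proj_apply]
  intro k hk
  exact Pi.single_eq_of_ne (by rintro rfl; exact absurd hk (by simpa using hc)) 1

theorem single_mem_Elast {n j : ℕ} {c : Fin n} (hc : n - j ≤ c.val) :
    Pi.single c (1 : ℂ) ∈ Elast n j := by
  simp only [Elast, mem_iInf, LinearMap.mem_ker, LinearMap.proj_apply]
  intro k hk
  exact Pi.single_eq_of_ne (by rintro rfl; exact absurd hk (by simpa using hc)) 1

theorem finrank_Efirst {n j : ℕ} (hj : j ≤ n) : finrank ℂ (Efirst n j) = j := by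
  rw [Efirst, (LinearMap.iInfKerProjEquiv ℂ (fun _ : Fin n => ℂ)
    (I := {k | k.val < j}) (J := {k | j ≤ k.val})
    (Set.disjoint_left.2 fun k (hk : k.val < j) hk' => absurd hk (not_lt.2 hk'))
    (fun k _ => lt_or_ge k.val j)).finrank_eq]
  simp [Fintype.card_subtype, Fin.card_filter_val_lt, hj]

theorem finrank_Elast {n j : ℕ} (hj : j ≤ n) : finrank ℂ (Elast n j) = j := by
  rw [Elast, (LinearMap.iInfKerProjEquiv ℂ (fun _ : Fin n => ℂ)
    (I := {k | n - j ≤ k.val}) (J := {k | k.val < n - j})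
    (Set.disjoint_left.2 fun k (hk : n - j ≤ k.val) hk' => absurd hk (not_le.2 hk'))
    (fun k _ => (le_or_gt (n - j) k.val).imp id id)).finrank_eq]
  have := card_filter_add_card_filter_not (s := univ) fun k : Fin n => k.val < n - j
  simp only [Fin.card_filter_val_lt, not_lt, card_univ, Fintype.card_fin] at this
  rw [Module.finrank_fintype_fun_eq_card, Fintype.card_ofFinset]
  simp only [Set.mem_ofPred_eq]
  omega

theorem projE_single_of_lt {n p : ℕ} {c : Fin n} (hc : c.val < p) :
    projE n p (Pi.single c 1) = Pi.single c 1 := by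
  ext k
  by_cases hk : k = c
  · subst hk; simp [projE, hc]
  · simp [projE, Pi.single_eq_of_ne hk]

theorem projE_single_of_le {n p : ℕ} {c : Fin n} (hc : p ≤ c.val) :
    projE n p (Pi.single c 1) = 0 := by
  ext k
  by_cases hk : k = c
  · subst hk; simp [projE, hc]
  · simp [projE, Pi.single_eq_of_ne hk]

namespace Clan

variable {p q : ℕ} (γ : Clan p q)

def partner (k : Fin (p + q)) : Fin (p + q) :=
  match γ.symbol k with
  | .inl j => j
  | .inr _ => k

variable {γ} {k j : Fin (p + q)}

theorem partner_of_symbol_inl (h : γ.symbol k = .inl j) : γ.partner k = j := by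
  simp [partner, h]

theorem partner_of_symbol_inr {b : Bool} (h : γ.symbol k = .inr b) : γ.partner k = k := by
  simp [partner, h]

theorem mem_plusSet_of_symbol_inl (h : γ.symbol k = .inl j) : k ∈ γ.plusSet ↔ j < k := by
  simp [plusSet, h]

theorem mem_tplusSet_of_symbol_inl (h : γ.symbol k = .inl j) : k ∈ γ.tplusSet ↔ k < j := by
  simp [tplusSet, h]

theorem mem_plusSet_of_symbol_inr {b : Bool} (h : γ.symbol k = .inr b) :
    k ∈ γ.plusSet ↔ b = true := by
  simp [plusSet, h]

theorem mem_tplusSet_of_symbol_inr {b : Bool} (h : γ.symbol k = .inr b) :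
    k ∈ γ.tplusSet ↔ b = true := by
  simp [tplusSet, h]

theorem notMem_plusSet_of_symbol_inl (h : γ.symbol k = .inl j) : k ∉ γ.plusSet ↔ k < j := by
  rw [mem_plusSet_of_symbol_inl h, not_lt, le_iff_lt_or_eq, or_iff_left (γ.mate_ne k j h).symm]

theorem notMem_tplusSet_of_symbol_inl (h : γ.symbol k = .inl j) : k ∉ γ.tplusSet ↔ j < k := by
  rw [mem_tplusSet_of_symbol_inl h, not_lt, le_iff_lt_or_eq, or_iff_left (γ.mate_ne k j h)]

variable (γ)

theorem partner_involutive : Function.Involutive γ.partner := by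
  intro k
  rcases h : γ.symbol k with j | b
  · rw [partner_of_symbol_inl h, partner_of_symbol_inl (γ.mate_invol k j h)]
  · rw [partner_of_symbol_inr h, partner_of_symbol_inr h]

theorem partner_mem_tplusSet_iff : γ.partner k ∈ γ.tplusSet ↔ k ∈ γ.plusSet := by
  rcases h : γ.symbol k with j | b
  · rw [partner_of_symbol_inl h, mem_plusSet_of_symbol_inl h,
      mem_tplusSet_of_symbol_inl (γ.mate_invol k j h)]
  · rw [partner_of_symbol_inr h, mem_plusSet_of_symbol_inr h, mem_tplusSet_of_symbol_inr h]

theorem partner_mem_plusSet_iff : γ.partner k ∈ γ.plusSet ↔ k ∈ γ.tplusSet := by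
  rw [← partner_mem_tplusSet_iff, γ.partner_involutive]

theorem card_plusSet_eq_card_tplusSet : γ.plusSet.card = γ.tplusSet.card := by
  rw [← card_image_of_injective γ.tplusSet γ.partner_involutive.injective]
  congr 1
  ext k
  rw [← γ.partner_mem_tplusSet_iff, mem_image]
  exact ⟨fun hk => ⟨_, hk, γ.partner_involutive k⟩,
    fun ⟨x, hx, hxk⟩ => hxk ▸ (γ.partner_involutive x).symm ▸ hx⟩

theorem card_tplusSet : γ.tplusSet.card = p := by
  have h_plus :
      γ.tplusSet.filter (· ∈ γ.plusSet) = univ.filter (γ.symbol · = .inr true) := by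
    ext k
    rcases h : γ.symbol k with j | b
    · simpa [mem_plusSet_of_symbol_inl h, mem_tplusSet_of_symbol_inl h, h] using le_of_lt
    · simp [mem_plusSet_of_symbol_inr h, mem_tplusSet_of_symbol_inr h, h]
  have h_minus :
      γ.plusSetᶜ.filter (· ∉ γ.tplusSet) = univ.filter (γ.symbol · = .inr false) := by
    ext k
    rcases h : γ.symbol k with j | b
    · simpa [mem_plusSet_of_symbol_inl h, mem_tplusSet_of_symbol_inl h, h] using
        fun hkj => lt_of_le_of_ne hkj (γ.mate_ne k j h).symm
    · simp [mem_plusSet_of_symbol_inr h, mem_tplusSet_of_symbol_inr h, h]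
  have h_open :
      γ.tplusSet.filter (· ∉ γ.plusSet) = γ.plusSetᶜ.filter (· ∈ γ.tplusSet) := by
    ext k; simp [and_comm]
  -- `|γ̃₊| - |γ₊ᶜ| = #(+) - #(−) = p - q` and `|γ̃₊| + |γ₊ᶜ| = |γ₊| + |γ₊ᶜ| = p + q`
  have h_tplus := card_filter_add_card_filter_not (s := γ.tplusSet) (· ∈ γ.plusSet)
  have h_compl := card_filter_add_card_filter_not (s := γ.plusSetᶜ) (· ∉ γ.tplusSet)
  simp only [not_not] at h_compl
  rw [h_plus] at h_tplus
  rw [h_minus, ← h_open, card_compl, Fintype.card_fin] at h_compl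
  have := γ.balance
  have := γ.card_plusSet_eq_card_tplusSet
  have := γ.plusSet.card_le_univ
  simp only [Fintype.card_fin] at this
  omega

theorem cplus_eq_card (i : ℕ) : γ.cplus i = (γ.plusSet.filter (·.val < i)).card := by
  simp only [cplus, plusSet, filter_filter, and_comm]

theorem cminus_eq_card (i : ℕ) : γ.cminus i = (γ.tplusSetᶜ.filter (·.val < i)).card := by
  simp only [cminus]
  congr 1
  ext k
  rcases h : γ.symbol k with j | b
  · simp [mem_tplusSet_of_symbol_inl h, h, and_comm, le_iff_lt_or_eq, γ.mate_ne k j h]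
  · cases b <;> simp [mem_tplusSet_of_symbol_inr h, h]

/- `posCoord` sends `γ̃₊` onto the first `p` coordinates; `negCoord` sends the complement of `γ₊`,
i.e. the `−`'s and the openers, onto the last `q`. Their other values play no role. -/
def posCoord : Equiv.Perm (Fin (p + q)) :=
  (Fin.exists_perm_val_lt_iff_mem γ.tplusSet γ.card_tplusSet).choose

def negCoord : Equiv.Perm (Fin (p + q)) :=
  (Fin.exists_perm_val_lt_iff_mem γ.plusSet
    (γ.card_plusSet_eq_card_tplusSet.trans γ.card_tplusSet)).choose

theorem posCoord_lt_iff (k : Fin (p + q)) : (γ.posCoord k).val < p ↔ k ∈ γ.tplusSet :=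
  (Fin.exists_perm_val_lt_iff_mem γ.tplusSet γ.card_tplusSet).choose_spec k

theorem negCoord_lt_iff (k : Fin (p + q)) : (γ.negCoord k).val < p ↔ k ∈ γ.plusSet :=
  (Fin.exists_perm_val_lt_iff_mem γ.plusSet
    (γ.card_plusSet_eq_card_tplusSet.trans γ.card_tplusSet)).choose_spec k

theorem le_negCoord_iff (k : Fin (p + q)) : p ≤ (γ.negCoord k).val ↔ k ∉ γ.plusSet := by
  rw [← not_lt, negCoord_lt_iff]

def flagVec (k : Fin (p + q)) : Fin (p + q) → ℂ :=
  match γ.symbol k with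
  | .inr true => Pi.single (γ.posCoord k) 1
  | .inr false => Pi.single (γ.negCoord k) 1
  | .inl j =>
    if k < j then Pi.single (γ.posCoord k) 1 + Pi.single (γ.negCoord k) 1
    else Pi.single (γ.negCoord j) 1

def flag (i : ℕ) : Submodule ℂ (Fin (p + q) → ℂ) :=
  span ℂ (γ.flagVec '' {k | k.val < i})

variable {γ}

theorem single_posCoord_mem_Efirst (hk : k ∈ γ.tplusSet) :
    Pi.single (γ.posCoord k) 1 ∈ Efirst (p + q) p :=
  single_mem_Efirst ((γ.posCoord_lt_iff k).2 hk)

theorem single_negCoord_mem_Elast (hk : k ∉ γ.plusSet) :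
    Pi.single (γ.negCoord k) 1 ∈ Elast (p + q) q :=
  single_mem_Elast (by have := (γ.le_negCoord_iff k).2 hk; omega)

theorem flagVec_of_symbol_inr_true (h : γ.symbol k = .inr true) :
    γ.flagVec k = Pi.single (γ.posCoord k) 1 := by
  simp [flagVec, h]

theorem flagVec_of_symbol_inr_false (h : γ.symbol k = .inr false) :
    γ.flagVec k = Pi.single (γ.negCoord k) 1 := by
  simp [flagVec, h]

theorem flagVec_of_symbol_inl_of_lt (h : γ.symbol k = .inl j) (hkj : k < j) :
    γ.flagVec k = Pi.single (γ.posCoord k) 1 + Pi.single (γ.negCoord k) 1 := by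
  simp [flagVec, h, hkj]

theorem flagVec_of_symbol_inl_of_gt (h : γ.symbol k = .inl j) (hjk : j < k) :
    γ.flagVec k = Pi.single (γ.negCoord j) 1 := by
  simp [flagVec, h, not_lt.2 hjk.le]

theorem projE_flagVec_of_mem (hk : k ∈ γ.tplusSet) :
    projE (p + q) p (γ.flagVec k) = Pi.single (γ.posCoord k) 1 := by
  have h_pos := (γ.posCoord_lt_iff k).2 hk
  rcases h : γ.symbol k with j | b
  · have hkj := (mem_tplusSet_of_symbol_inl h).1 hk
    have h_neg := (γ.le_negCoord_iff k).2 ((notMem_plusSet_of_symbol_inl h).2 hkj)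
    rw [flagVec_of_symbol_inl_of_lt h hkj, map_add, projE_single_of_lt h_pos,
      projE_single_of_le h_neg, add_zero]
  · obtain rfl := (mem_tplusSet_of_symbol_inr h).1 hk
    rw [flagVec_of_symbol_inr_true h, projE_single_of_lt h_pos]

theorem projE_flagVec_of_notMem (hk : k ∉ γ.tplusSet) : projE (p + q) p (γ.flagVec k) = 0 := by
  rcases h : γ.symbol k with j | b
  · have hjk := (notMem_tplusSet_of_symbol_inl h).1 hk
    have h_neg := (γ.le_negCoord_iff j).2
      ((notMem_plusSet_of_symbol_inl (γ.mate_invol k j h)).2 hjk)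
    rw [flagVec_of_symbol_inl_of_gt h hjk, projE_single_of_le h_neg]
  · obtain rfl : b = false := by simpa using (mem_tplusSet_of_symbol_inr h).not.1 hk
    have h_neg := (γ.le_negCoord_iff k).2 (by simp [mem_plusSet_of_symbol_inr h])
    rw [flagVec_of_symbol_inr_false h, projE_single_of_le h_neg]

theorem flagVec_mem_flag {i : ℕ} (hk : k.val < i) : γ.flagVec k ∈ γ.flag i :=
  subset_span ⟨k, hk, rfl⟩

theorem single_posCoord_mem_flag {i : ℕ} (hk : k ∈ γ.tplusSet) (hi : (γ.partner k).val < i) :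
    Pi.single (γ.posCoord k) 1 ∈ γ.flag i := by
  rcases h : γ.symbol k with j | b
  · rw [partner_of_symbol_inl h] at hi
    have hkj := (mem_tplusSet_of_symbol_inl h).1 hk
    have h_diff : Pi.single (γ.posCoord k) 1 = γ.flagVec k - γ.flagVec j := by
      rw [flagVec_of_symbol_inl_of_lt h hkj,
        flagVec_of_symbol_inl_of_gt (γ.mate_invol k j h) hkj, add_sub_cancel_right]
    rw [h_diff]
    exact sub_mem (flagVec_mem_flag (lt_trans hkj hi)) (flagVec_mem_flag hi)
  · rw [partner_of_symbol_inr h] at hi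
    obtain rfl := (mem_tplusSet_of_symbol_inr h).1 hk
    exact flagVec_of_symbol_inr_true h ▸ flagVec_mem_flag hi

theorem single_negCoord_mem_flag {i : ℕ} (hk : k ∉ γ.plusSet) (hi : (γ.partner k).val < i) :
    Pi.single (γ.negCoord k) 1 ∈ γ.flag i := by
  rcases h : γ.symbol k with j | b
  · rw [partner_of_symbol_inl h] at hi
    have hkj := (notMem_plusSet_of_symbol_inl h).1 hk
    exact flagVec_of_symbol_inl_of_gt (γ.mate_invol k j h) hkj ▸ flagVec_mem_flag hi
  · rw [partner_of_symbol_inr h] at hi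
    obtain rfl : b = false := by simpa using (mem_plusSet_of_symbol_inr h).not.1 hk
    exact flagVec_of_symbol_inr_false h ▸ flagVec_mem_flag hi

theorem single_posCoord_mem_flag_sup_Elast {i : ℕ} (hk : k ∈ γ.tplusSet) (hi : k.val < i) :
    Pi.single (γ.posCoord k) 1 ∈ γ.flag i ⊔ Elast (p + q) q := by
  rcases h : γ.symbol k with j | b
  · have hkj := (mem_tplusSet_of_symbol_inl h).1 hk
    have h_diff : Pi.single (γ.posCoord k) 1 = γ.flagVec k - Pi.single (γ.negCoord k) 1 := by
      rw [flagVec_of_symbol_inl_of_lt h hkj, add_sub_cancel_right]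
    rw [h_diff]
    exact sub_mem (mem_sup_left (flagVec_mem_flag hi))
      (mem_sup_right (single_negCoord_mem_Elast ((notMem_plusSet_of_symbol_inl h).2 hkj)))
  · obtain rfl := (mem_tplusSet_of_symbol_inr h).1 hk
    exact mem_sup_left (flagVec_of_symbol_inr_true h ▸ flagVec_mem_flag hi)

theorem single_negCoord_mem_flag_sup_Efirst {i : ℕ} (hk : k ∉ γ.plusSet) (hi : k.val < i) :
    Pi.single (γ.negCoord k) 1 ∈ γ.flag i ⊔ Efirst (p + q) p := by
  rcases h : γ.symbol k with j | b
  · have hkj := (notMem_plusSet_of_symbol_inl h).1 hk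
    have h_diff : Pi.single (γ.negCoord k) 1 = γ.flagVec k - Pi.single (γ.posCoord k) 1 := by
      rw [flagVec_of_symbol_inl_of_lt h hkj, add_sub_cancel_left]
    rw [h_diff]
    exact sub_mem (mem_sup_left (flagVec_mem_flag hi))
      (mem_sup_right (single_posCoord_mem_Efirst ((mem_tplusSet_of_symbol_inl h).2 hkj)))
  · obtain rfl : b = false := by simpa using (mem_plusSet_of_symbol_inr h).not.1 hk
    exact mem_sup_left (flagVec_of_symbol_inr_false h ▸ flagVec_mem_flag hi)

variable (γ)

theorem flag_eq_top : γ.flag (p + q) = ⊤ := by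
  rw [eq_top_iff, ← (Pi.basisFun ℂ (Fin (p + q))).span_eq, span_le]
  rintro _ ⟨c, rfl⟩
  rw [Pi.basisFun_apply]
  by_cases hc : c.val < p
  · have hk : γ.posCoord.symm c ∈ γ.tplusSet := by
      rwa [← posCoord_lt_iff, Equiv.apply_symm_apply]
    simpa using single_posCoord_mem_flag hk (γ.partner _).isLt
  · have hk : γ.negCoord.symm c ∉ γ.plusSet := by
      rwa [← negCoord_lt_iff, Equiv.apply_symm_apply]
    simpa using single_negCoord_mem_flag hk (γ.partner _).isLt

theorem linearIndependent_flagVec : LinearIndependent ℂ γ.flagVec := by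
  refine linearIndependent_of_top_le_span_of_card_eq_finrank ?_ (by simp)
  rw [← Set.image_univ, ← γ.flag_eq_top, flag]
  exact span_mono (Set.image_mono (Set.subset_univ _))

theorem finrank_flag {i : ℕ} (hi : i ≤ p + q) : finrank ℂ (γ.flag i) = i := by
  have h_set : {k : Fin (p + q) | k.val < i} = ↑(univ.filter fun k : Fin (p + q) => k.val < i) :=
    by simp
  rw [flag, h_set, γ.linearIndependent_flagVec.finrank_span_image_finset,
    Fin.card_filter_val_lt, min_eq_right hi]

def completeFlag : CompleteFlag (p + q) where
  F i := γ.flag i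
  mono _ _ hij := span_mono (Set.image_mono fun _ hk => lt_of_lt_of_le hk (Fin.le_def.1 hij))
  finrank_eq i := γ.finrank_flag (Nat.lt_succ_iff.1 i.isLt)

theorem flag_inf_Efirst {i : ℕ} (hi : i ≤ p + q) :
    coordSpan ℂ ((γ.plusSet.filter (·.val < i)).image (γ.posCoord ∘ γ.partner))
      = γ.flag i ⊓ Efirst (p + q) p := by
  have h_disj : Disjoint (univ.filter (·.val < p))
      ((γ.plusSetᶜ.filter (·.val < i)).image γ.negCoord) := by
    refine disjoint_left.2 fun c hc hc' => ?_
    obtain ⟨k, hk, rfl⟩ := mem_image.1 hc'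
    exact ((γ.le_negCoord_iff k).2 (mem_compl.1 (mem_filter.1 hk).1)).not_gt
      (mem_filter.1 hc).2
  refine eq_inf_of_le_sup_of_le_inf (U := coordSpan ℂ
    (univ.filter (·.val < p) ∪ (γ.plusSetᶜ.filter (·.val < i)).image γ.negCoord)) ?_ ?_ ?_
  · refine coordSpan_le_iff.2 fun c hc => ?_
    rcases mem_union.1 hc with hc | hc
    · exact mem_sup_right (single_mem_Efirst (mem_filter.1 hc).2)
    · obtain ⟨k, hk, rfl⟩ := mem_image.1 hc
      rw [mem_filter, mem_compl] at hk
      exact single_negCoord_mem_flag_sup_Efirst hk.1 hk.2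
  · refine coordSpan_le_iff.2 fun c hc => ?_
    obtain ⟨k, hk, rfl⟩ := mem_image.1 hc
    rw [mem_filter] at hk
    have hpk : γ.partner k ∈ γ.tplusSet := γ.partner_mem_tplusSet_iff.2 hk.1
    exact ⟨single_posCoord_mem_flag hpk (by rw [γ.partner_involutive]; exact hk.2),
      single_posCoord_mem_Efirst hpk⟩
  · rw [γ.finrank_flag hi, finrank_Efirst (Nat.le_add_right p q), finrank_coordSpan,
      finrank_coordSpan, card_union_of_disjoint h_disj,
      card_image_of_injective _ γ.negCoord.injective,
      card_image_of_injective _ (γ.posCoord.injective.comp γ.partner_involutive.injective),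
      Fin.card_filter_val_lt, min_eq_right (Nat.le_add_right p q)]
    have := γ.plusSet.card_filter_val_lt_add_card_compl hi
    omega

theorem flag_inf_Elast {i : ℕ} (hi : i ≤ p + q) :
    coordSpan ℂ ((γ.tplusSetᶜ.filter (·.val < i)).image (γ.negCoord ∘ γ.partner))
      = γ.flag i ⊓ Elast (p + q) q := by
  have h_disj : Disjoint (univ.filter (·.val < p))ᶜ
      ((γ.tplusSet.filter (·.val < i)).image γ.posCoord) := by
    refine disjoint_left.2 fun c hc hc' => ?_
    obtain ⟨k, hk, rfl⟩ := mem_image.1 hc'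
    exact mem_compl.1 hc
      (mem_filter.2 ⟨mem_univ _, (γ.posCoord_lt_iff k).2 (mem_filter.1 hk).1⟩)
  refine eq_inf_of_le_sup_of_le_inf (U := coordSpan ℂ
    ((univ.filter (·.val < p))ᶜ ∪ (γ.tplusSet.filter (·.val < i)).image γ.posCoord))
    ?_ ?_ ?_
  · refine coordSpan_le_iff.2 fun c hc => ?_
    rcases mem_union.1 hc with hc | hc
    · simp only [mem_compl, mem_filter, mem_univ, true_and, not_lt] at hc
      exact mem_sup_right (single_mem_Elast (by omega))
    · obtain ⟨k, hk, rfl⟩ := mem_image.1 hc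
      rw [mem_filter] at hk
      exact single_posCoord_mem_flag_sup_Elast hk.1 hk.2
  · refine coordSpan_le_iff.2 fun c hc => ?_
    obtain ⟨k, hk, rfl⟩ := mem_image.1 hc
    rw [mem_filter, mem_compl] at hk
    have hpk : γ.partner k ∉ γ.plusSet := γ.partner_mem_plusSet_iff.not.2 hk.1
    exact ⟨single_negCoord_mem_flag hpk (by rw [γ.partner_involutive]; exact hk.2),
      single_negCoord_mem_Elast hpk⟩
  · rw [γ.finrank_flag hi, finrank_Elast (Nat.le_add_left q p), finrank_coordSpan,
      finrank_coordSpan, card_union_of_disjoint h_disj,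
      card_image_of_injective _ γ.posCoord.injective,
      card_image_of_injective _ (γ.negCoord.injective.comp γ.partner_involutive.injective),
      card_compl, Fin.card_filter_val_lt, min_eq_right (Nat.le_add_right p q), Fintype.card_fin]
    have := γ.tplusSet.card_filter_val_lt_add_card_compl hi
    omega

theorem finrank_flag_inf_Efirst {i : ℕ} (hi : i ≤ p + q) :
    finrank ℂ ↥(γ.flag i ⊓ Efirst (p + q) p) = γ.cplus i := by
  rw [← γ.flag_inf_Efirst hi, finrank_coordSpan,
    card_image_of_injective _ (γ.posCoord.injective.comp γ.partner_involutive.injective),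
    cplus_eq_card]

theorem finrank_flag_inf_Elast {i : ℕ} (hi : i ≤ p + q) :
    finrank ℂ ↥(γ.flag i ⊓ Elast (p + q) q) = γ.cminus i := by
  rw [← γ.flag_inf_Elast hi, finrank_coordSpan,
    card_image_of_injective _ (γ.negCoord.injective.comp γ.partner_involutive.injective),
    cminus_eq_card]

def straddlingOpeners (i j : ℕ) : Finset (Fin (p + q)) :=
  univ.filter fun s => s.val < i ∧ ∃ t, γ.symbol s = .inl t ∧ s < t ∧ j ≤ t.val

theorem map_flag_sup_flag {i j : ℕ} (hij : i < j) :
    (γ.flag i).map (projE (p + q) p) ⊔ γ.flag j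
      = γ.flag j ⊔ coordSpan ℂ ((γ.straddlingOpeners i j).image γ.posCoord) := by
  apply le_antisymm
  · refine sup_le (map_le_iff_le_comap.2 (span_le.2 ?_)) le_sup_left
    rintro _ ⟨k, hk : k.val < i, rfl⟩
    rw [SetLike.mem_coe, mem_comap]
    by_cases hk' : k ∈ γ.tplusSet
    · rw [projE_flagVec_of_mem hk']
      by_cases hj : (γ.partner k).val < j
      · exact mem_sup_left (single_posCoord_mem_flag hk' hj)
      refine mem_sup_right (single_mem_coordSpan
        (mem_image_of_mem _ (mem_filter.2 ⟨mem_univ _, hk, ?_⟩)))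
      rcases h : γ.symbol k with t | b
      · rw [partner_of_symbol_inl h] at hj
        exact ⟨t, rfl, (mem_tplusSet_of_symbol_inl h).1 hk', not_lt.1 hj⟩
      · rw [partner_of_symbol_inr h] at hj
        omega
    · rw [projE_flagVec_of_notMem hk']
      exact zero_mem _
  · refine sup_le le_sup_right (coordSpan_le_iff.2 fun c hc => ?_)
    obtain ⟨s, hs, rfl⟩ := mem_image.1 hc
    obtain ⟨hsi, t, hst, hlt, -⟩ := (mem_filter.1 hs).2
    rw [← projE_flagVec_of_mem ((mem_tplusSet_of_symbol_inl hst).2 hlt)]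
    exact mem_sup_left (mem_map_of_mem (flagVec_mem_flag hsi))

theorem flag_inf_coordSpan_straddlingOpeners {i j : ℕ} (hj : j ≤ p + q) :
    γ.flag j ⊓ coordSpan ℂ ((γ.straddlingOpeners i j).image γ.posCoord) = ⊥ := by
  have h_le :
      coordSpan ℂ ((γ.straddlingOpeners i j).image γ.posCoord) ≤ Efirst (p + q) p := by
    refine coordSpan_le_iff.2 fun c hc => ?_
    obtain ⟨s, hs, rfl⟩ := mem_image.1 hc
    obtain ⟨-, t, hst, hlt, -⟩ := (mem_filter.1 hs).2
    exact single_posCoord_mem_Efirst ((mem_tplusSet_of_symbol_inl hst).2 hlt)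
  rw [← inf_eq_right.2 h_le, ← inf_assoc, ← γ.flag_inf_Efirst hj]
  refine (disjoint_coordSpan (disjoint_left.2 fun c hc hc' => ?_)).eq_bot
  obtain ⟨k, hk, rfl⟩ := mem_image.1 hc
  obtain ⟨s, hs, hsk⟩ := mem_image.1 hc'
  obtain ⟨-, t, hst, -, hjt⟩ := (mem_filter.1 hs).2
  have hks : k = γ.partner s := by
    rw [γ.posCoord.injective hsk, γ.partner_involutive]
  rw [hks, partner_of_symbol_inl hst, mem_filter] at hk
  omega

theorem finrank_map_flag_sup_flag {i j : ℕ} (hij : i < j) (hj : j ≤ p + q) :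
    finrank ℂ ↥((γ.flag i).map (projE (p + q) p) ⊔ γ.flag j) = j + γ.cpair i j := by
  have h := finrank_sup_add_finrank_inf_eq (γ.flag j)
    (coordSpan ℂ ((γ.straddlingOpeners i j).image γ.posCoord))
  rwa [← γ.map_flag_sup_flag hij, γ.flag_inf_coordSpan_straddlingOpeners hj, finrank_bot,
    add_zero, γ.finrank_flag hj, finrank_coordSpan,
    card_image_of_injective _ γ.posCoord.injective] at h

end Clan

theorem Qclan_nonempty_general {p q : ℕ} (γ : Clan p q) :
    ∃ Fl : CompleteFlag (p + q), MemQ γ Fl :=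
  ⟨γ.completeFlag,
    fun _ _ hi => ⟨γ.finrank_flag_inf_Efirst hi, γ.finrank_flag_inf_Elast hi⟩,
    fun _ _ _ hij hj => γ.finrank_map_flag_sup_flag hij hj⟩

/-- For every `(p,q)`-clan `γ`, the set `Q_γ` is nonempty:
some complete flag satisfies all the defining conditions of `Q_γ`. -/
theorem Qclan_nonempty {p q : ℕ} (hn : 1 ≤ p + q) (γ : Clan p q) :
    ∃ Fl : CompleteFlag (p + q), MemQ γ Fl :=
  Qclan_nonempty_general γ
end
end
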